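/- Let t ≥ 1 be an integer, assume m divides tq+1, and set c := (tq+1)/m, with c ≤ q−1. Then dim_F L(tq+1) = dim_F L(tq−1) + 2. (A basis of L(tq+1) is obtained from a basis of L(tq−1) by adjoining the two monomials x^t and y^c; this shows the complete linear system L((tq+1)Q∞) defines an embedding of C_f.) -/

import Mathlib

/-!
The monomials `x^i y^j` with `j < q` form an `F`-basis of `R` (the powers of `y` are an
`F[x]`-basis, the powers of `x` an `F`-basis of `F[x]`), so `dim L(s)` counts the exponents
`(i, j)`, `j < q`, of weight `q i + m j ≤ s`. Passing from `s = tq - 1` to `s = tq + 1` adds the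
exponents of weight `tq` and `tq + 1`. As `m c = tq + 1`, `c` is an inverse of `m` modulo `q`:
weight `≡ 0` forces `j = 0`, hence `(i, j) = (t, 0)`, and weight `≡ 1` forces `j ≡ c`, hence
`(i, j) = (0, c)`.
-/

open Polynomial

noncomputable section

/-- The affine coordinate ring `R = F[x][y]/(y^q + y - f(x))` of the
Artin-Schreier curve `y^q + y = f(x)`, as a quotient of `F[x][y]`. -/
abbrev ASRing (F : Type*) [Field F] (q : ℕ) (f : F[X]) : Type _ :=
  AdjoinRoot ((X : (F[X])[X]) ^ q + X - C f)

/-- The image of `x` in `R`. -/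
def ASx (F : Type*) [Field F] (q : ℕ) (f : F[X]) : ASRing F q f :=
  AdjoinRoot.of _ X

/-- The image of `y` in `R`. -/
def ASy (F : Type*) [Field F] (q : ℕ) (f : F[X]) : ASRing F q f :=
  AdjoinRoot.root _

/-- `L(s)`: the `F`-linear span in `R` of the monomials `x^i * y^j` with
`i ≥ 0`, `0 ≤ j ≤ q - 1` and `q*i + m*j ≤ s`. -/
def Lspace (F : Type*) [Field F] (q : ℕ) (f : F[X]) (m s : ℕ) :
    Submodule F (ASRing F q f) :=
  Submodule.span F {r | ∃ i j : ℕ, j ≤ q - 1 ∧ q * i + m * j ≤ s ∧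
    r = ASx F q f ^ i * ASy F q f ^ j}

section

variable {R M ι : Type*} [Ring R] [StrongRankCondition R] [AddCommGroup M] [Module R M]

theorem finrank_span_image_finset {v : ι → M} {s : Finset ι}
    (hv : LinearIndepOn R v (s : Set ι)) :
    Module.finrank R (Submodule.span R (v '' s)) = s.card := by
  classical
  have := nontrivial_of_invariantBasisNumber R
  rw [← Finset.coe_image,
    finrank_span_finset_eq_card (by rw [Finset.coe_image]; exact hv.id_image),
    Finset.card_image_of_injOn hv.injOn]

end

namespace AdjoinRoot

variable {K : Type*} [CommRing K] {g : K[X][X]}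

theorem linearIndepOn_of_X_pow_mul_root_pow (hg : g.Monic) :
    LinearIndepOn K (fun ij : ℕ × ℕ => of g X ^ ij.1 * root g ^ ij.2)
      {ij | ij.2 < g.natDegree} := by
  have hrange : {ij : ℕ × ℕ | ij.2 < g.natDegree} =
      Set.range (Prod.map id Fin.val : ℕ × Fin g.natDegree → ℕ × ℕ) := by
    ext ⟨i, j⟩
    simp
  have hbasis : (fun ij : ℕ × ℕ => of g X ^ ij.1 * root g ^ ij.2) ∘ Prod.map id Fin.val =
      (basisMonomials K).smulTower (powerBasis' hg).basis := by
    funext ⟨i, j⟩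
    simp [Module.Basis.smulTower_apply, Algebra.smul_def, monomial_one_right_eq_X_pow]
  rw [hrange, linearIndepOn_range_iff (Function.injective_id.prodMap Fin.val_injective)]
  exact hbasis ▸ Module.Basis.linearIndependent _

end AdjoinRoot

namespace Polynomial

theorem monic_X_pow_add_X_sub_C {R : Type*} [CommRing R] {q : ℕ} (hq : 2 ≤ q) (a : R) :
    (X ^ q + X - C a : R[X]).Monic := by
  rw [add_sub_assoc]
  exact monic_X_pow_add ((degree_X_sub_C_le a).trans_lt (by exact_mod_cast hq))

theorem natDegree_X_pow_add_X_sub_C {R : Type*} [CommRing R] [Nontrivial R] {q : ℕ}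
    (hq : 2 ≤ q) (a : R) :
    (X ^ q + X - C a : R[X]).natDegree = q := by
  rw [add_sub_assoc, natDegree_add_eq_left_of_degree_lt, natDegree_X_pow]
  rw [degree_X_pow]
  exact (degree_X_sub_C_le a).trans_lt (by exact_mod_cast hq)

end Polynomial

def LspaceExponents (q m s : ℕ) : Finset (ℕ × ℕ) :=
  (Finset.range (s + 1) ×ˢ Finset.range q).filter fun ij => q * ij.1 + m * ij.2 ≤ s

section Exponents

variable {q m : ℕ}

theorem mem_LspaceExponents (hq : 0 < q) {s : ℕ} {ij : ℕ × ℕ} :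
    ij ∈ LspaceExponents q m s ↔ ij.2 < q ∧ q * ij.1 + m * ij.2 ≤ s := by
  simp only [LspaceExponents, Finset.mem_filter, Finset.mem_product, Finset.mem_range]
  have : ij.1 ≤ q * ij.1 := Nat.le_mul_of_pos_left _ hq
  omega

variable {t c : ℕ}

theorem weight_mem_window_iff (ht : 1 ≤ t) (hmc : m * c = t * q + 1) (hcq : c < q) {i j : ℕ}
    (hj : j < q) :
    (t * q - 1 < q * i + m * j ∧ q * i + m * j ≤ t * q + 1) ↔
      (i, j) = (t, 0) ∨ (i, j) = (0, c) := by
  have hq : 0 < q := by omega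
  have htq : q ≤ t * q := Nat.le_mul_of_pos_left q ht
  have hcop : m.Coprime q := Nat.coprime_of_mul_modEq_one c (by simp [hmc, Nat.ModEq])
  have hmod : ∀ w, q * i + m * j = t * q + w → m * j ≡ w [MOD q] := fun w h => by
    simpa [Nat.ModEq, Nat.mul_add_mod, Nat.mul_add_mod'] using congrArg (· % q) h
  have hcancel : ∀ j', j' < q → m * j ≡ m * j' [MOD q] → j = j' := fun j' hj' h =>
    (Nat.ModEq.cancel_left_of_coprime hcop.symm h).eq_of_lt_of_lt hj hj'
  simp only [Prod.mk.injEq]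
  constructor
  · rintro ⟨hlo, hhi⟩
    obtain h | h : q * i + m * j = t * q + 0 ∨ q * i + m * j = t * q + 1 := by omega
    · obtain rfl : j = 0 := hcancel 0 hq (by simpa using hmod 0 h)
      refine Or.inl ⟨?_, rfl⟩
      simpa [mul_comm, hq.ne'] using h
    · obtain rfl : j = c := hcancel c hcq ((hmod 1 h).trans (by simp [hmc, Nat.ModEq]))
      refine Or.inr ⟨?_, rfl⟩
      simpa [hmc, hq.ne'] using h
  · rintro (⟨rfl, rfl⟩ | ⟨rfl, rfl⟩)
    · rw [mul_zero, add_zero, mul_comm q]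
      omega
    · rw [mul_zero, zero_add, hmc]
      omega

theorem card_LspaceExponents_add_two (ht : 1 ≤ t) (hmc : m * c = t * q + 1) (hcq : c < q) :
    (LspaceExponents q m (t * q + 1)).card = (LspaceExponents q m (t * q - 1)).card + 2 := by
  have hq : 0 < q := by omega
  have hsplit : LspaceExponents q m (t * q + 1) =
      LspaceExponents q m (t * q - 1) ∪ {(t, 0), (0, c)} := by
    ext ⟨i, j⟩
    simp only [Finset.mem_union, mem_LspaceExponents hq, Finset.mem_insert, Finset.mem_singleton]
    constructor
    · rintro ⟨hj, hw⟩
      by_cases hlo : q * i + m * j ≤ t * q - 1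
      · exact Or.inl ⟨hj, hlo⟩
      · exact Or.inr ((weight_mem_window_iff ht hmc hcq hj).1 ⟨by omega, hw⟩)
    · rintro (⟨hj, hw⟩ | hij)
      · exact ⟨hj, by omega⟩
      · have hj : j < q := by rcases hij with h | h <;> simp only [Prod.mk.injEq] at h <;> omega
        exact ⟨hj, ((weight_mem_window_iff ht hmc hcq hj).2 hij).2⟩
  have hdisj : Disjoint (LspaceExponents q m (t * q - 1)) {(t, 0), (0, c)} := by
    refine Finset.disjoint_left.2 fun ⟨i, j⟩ hmem hij => ?_
    obtain ⟨hj, hw⟩ : j < q ∧ q * i + m * j ≤ t * q - 1 := (mem_LspaceExponents hq).1 hmem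
    have := ((weight_mem_window_iff ht hmc hcq hj).2 (by simpa using hij)).1
    omega
  rw [hsplit, Finset.card_union_of_disjoint hdisj, Finset.card_pair (by simp; omega)]

end Exponents

theorem Lspace_eq_span_image (F : Type*) [Field F] {q : ℕ} (hq : 0 < q) (f : F[X]) (m s : ℕ) :
    Lspace F q f m s = Submodule.span F
      ((fun ij : ℕ × ℕ => ASx F q f ^ ij.1 * ASy F q f ^ ij.2) '' LspaceExponents q m s) := by
  rw [Lspace]
  congr 1
  ext r
  simp only [Set.mem_ofPred_eq, Set.mem_image, Finset.mem_coe, mem_LspaceExponents hq, Prod.exists]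
  constructor
  · rintro ⟨i, j, hj, hw, rfl⟩
    exact ⟨i, j, ⟨by omega, hw⟩, rfl⟩
  · rintro ⟨i, j, ⟨hj, hw⟩, rfl⟩
    exact ⟨i, j, by omega, hw, rfl⟩

theorem finrank_Lspace (F : Type*) [Field F] {q : ℕ} (hq : 2 ≤ q) (f : F[X]) (m s : ℕ) :
    Module.finrank F (Lspace F q f m s) = (LspaceExponents q m s).card := by
  rw [Lspace_eq_span_image F (by omega), finrank_span_image_finset]
  refine (AdjoinRoot.linearIndepOn_of_X_pow_mul_root_pow (monic_X_pow_add_X_sub_C hq f)).mono ?_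
  intro ij hij
  rw [Set.mem_ofPred_eq, natDegree_X_pow_add_X_sub_C hq]
  exact ((mem_LspaceExponents (by omega)).1 hij).1

theorem stmt_16_general (q : ℕ)
    (F : Type*) [Field F]
    (f : F[X]) (m : ℕ) (t : ℕ) (ht : 1 ≤ t) (hdvd : m ∣ t * q + 1)
    (c : ℕ) (hc : c = (t * q + 1) / m) (hcq : c ≤ q - 1) :
    Module.finrank F (Lspace F q f m (t * q + 1)) =
      Module.finrank F (Lspace F q f m (t * q - 1)) + 2 := by
  have hmc : m * c = t * q + 1 := hc ▸ Nat.mul_div_cancel' hdvd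
  have hc0 : c ≠ 0 := by
    rintro rfl
    omega
  have hq : 2 ≤ q := by omega
  rw [finrank_Lspace F hq, finrank_Lspace F hq]
  exact card_LspaceExponents_add_two ht hmc (by omega)

theorem stmt_16 (p k q : ℕ) (hp : p.Prime) (hk : 1 ≤ k) (hq : q = p ^ k)
    (F : Type*) [Field F] [CharP F p]
    (f : F[X]) (m : ℕ) (hm : m = f.natDegree) (hm2 : 2 ≤ m) (hmp : Nat.Coprime m p) (t : ℕ) (ht : 1 ≤ t) (hdvd : m ∣ t * q + 1)
    (c : ℕ) (hc : c = (t * q + 1) / m) (hcq : c ≤ q - 1) :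
    Module.finrank F (Lspace F q f m (t * q + 1)) =
      Module.finrank F (Lspace F q f m (t * q - 1)) + 2 :=
  stmt_16_general q F f m t ht hdvd c hc hcq
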